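/- arXiv:2311.09837 — 5 statements merged into one kernel-verified Lean document; each statement's English description precedes it below -/
import Mathlib

section
/- Let H and K be real Hilbert spaces, S : H → K a continuous linear bijection with adjoint S* : K → H, and let B̃ : dom(B̃) ⊆ K → K be m-accretive. Define B : dom(B) ⊆ H → H by dom(B) = {u ∈ H : Su ∈ dom(B̃)} and B(u) = S*(B̃(Su)). Then B is m-accretive on H. -/
open scoped RealInnerProductSpace

private lemma aux_nonexp {K0 : Type*} [NormedAddCommGroup K0] [InnerProductSpace ℝ K0]
    {domBt : Set K0} {Bt : K0 → K0}
    (hacc : ∀ u ∈ domBt, ∀ v ∈ domBt, 0 ≤ ⟪Bt u - Bt v, u - v⟫)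
    {l : ℝ} (hl : 0 ≤ l) {w1 w2 : K0} (h1 : w1 ∈ domBt) (h2 : w2 ∈ domBt) :
    ‖w1 - w2‖ ≤ ‖(w1 + l • Bt w1) - (w2 + l • Bt w2)‖ := by
  have key : (w1 + l • Bt w1) - (w2 + l • Bt w2) = (w1 - w2) + l • (Bt w1 - Bt w2) := by
    rw [smul_sub]; abel
  rw [key]
  have h := norm_add_sq_real (w1 - w2) (l • (Bt w1 - Bt w2))
  have hip : 0 ≤ ⟪w1 - w2, l • (Bt w1 - Bt w2)⟫ := by
    rw [real_inner_smul_right]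
    have h0 := hacc w1 h1 w2 h2
    rw [real_inner_comm] at h0
    exact mul_nonneg hl h0
  nlinarith [norm_nonneg ((w1 - w2) + l • (Bt w1 - Bt w2)), norm_nonneg (w1 - w2),
    sq_nonneg (‖l • (Bt w1 - Bt w2)‖)]

private lemma aux_extend {K0 : Type*} [NormedAddCommGroup K0] [InnerProductSpace ℝ K0]
    [CompleteSpace K0] {domBt : Set K0} {Bt : K0 → K0}
    (hacc : ∀ u ∈ domBt, ∀ v ∈ domBt, 0 ≤ ⟪Bt u - Bt v, u - v⟫)
    {l0 l : ℝ} (hl0 : 0 < l0) (hl : 0 < l) (hll : l0 < 2 * l)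
    (h0 : ∀ g : K0, ∃ w ∈ domBt, w + l0 • Bt w = g) :
    ∀ g : K0, ∃ w ∈ domBt, w + l • Bt w = g := by
  classical
  intro g
  choose J hJmem hJeq using h0
  set r := l0 / l with hr
  have hr0 : 0 < r := div_pos hl0 hl
  have hr2 : r < 2 := (div_lt_iff₀ hl).2 (by linarith)
  have hk : |1 - r| < 1 := by rw [abs_lt]; constructor <;> linarith
  set Φ : K0 → K0 := fun w => J (r • g + (1 - r) • w) with hΦ
  have hnonexp : ∀ a b : K0, ‖J a - J b‖ ≤ ‖a - b‖ := by
    intro a b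
    have := aux_nonexp hacc hl0.le (hJmem a) (hJmem b)
    rwa [hJeq, hJeq] at this
  have hlip : LipschitzWith ⟨|1 - r|, abs_nonneg _⟩ Φ := by
    apply LipschitzWith.of_dist_le_mul
    intro a b
    simp only [hΦ, dist_eq_norm, NNReal.coe_mk]
    calc ‖J (r • g + (1 - r) • a) - J (r • g + (1 - r) • b)‖
        ≤ ‖(r • g + (1 - r) • a) - (r • g + (1 - r) • b)‖ := hnonexp _ _
      _ = |1 - r| * ‖a - b‖ := by
          rw [add_sub_add_left_eq_sub, ← smul_sub, norm_smul, Real.norm_eq_abs]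
  have hcw : ContractingWith ⟨|1 - r|, abs_nonneg _⟩ Φ := ⟨by exact_mod_cast hk, hlip⟩
  haveI : Nonempty K0 := ⟨0⟩
  set w := ContractingWith.fixedPoint Φ hcw with hwdef
  have hw : Φ w = w := hcw.fixedPoint_isFixedPt
  have hwmem : w ∈ domBt := by rw [← hw]; exact hJmem _
  have heq : w + l0 • Bt w = r • g + (1 - r) • w := by
    conv_lhs => rw [← hw]
    simp only [hΦ]
    exact hJeq _
  have h1 : l0 • Bt w = r • g - r • w := by
    have h2 : (1 - r) • w = w - r • w := by rw [sub_smul, one_smul]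
    rw [h2] at heq
    have h3 : l0 • Bt w = (r • g + (w - r • w)) - w := by
      rw [eq_sub_iff_add_eq, add_comm]; exact heq
    rw [h3]; abel
  have hl0' : l0 ≠ 0 := ne_of_gt hl0
  have h2 : l • Bt w = g - w := by
    have h3 : l • Bt w = (l / l0) • (l0 • Bt w) := by
      rw [smul_smul, div_mul_cancel₀ _ hl0']
    have h4 : (l / l0) * r = 1 := by rw [hr]; field_simp
    rw [h3, h1, smul_sub, smul_smul, smul_smul, h4, one_smul, one_smul]
  exact ⟨w, hwmem, by rw [h2]; abel⟩

private lemma aux_all {K0 : Type*} [NormedAddCommGroup K0] [InnerProductSpace ℝ K0]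
    [CompleteSpace K0] {domBt : Set K0} {Bt : K0 → K0}
    (hacc : ∀ u ∈ domBt, ∀ v ∈ domBt, 0 ≤ ⟪Bt u - Bt v, u - v⟫)
    (honto : ∀ f : K0, ∃ u ∈ domBt, u + Bt u = f) :
    ∀ l : ℝ, 0 < l → ∀ g : K0, ∃ w ∈ domBt, w + l • Bt w = g := by
  have base : ∀ n : ℕ, ∀ g : K0, ∃ w ∈ domBt, w + ((3 / 4 : ℝ) ^ n) • Bt w = g := by
    intro n
    induction n with
    | zero => simpa using honto
    | succ n ih =>
      refine aux_extend hacc (by positivity) (by positivity) ?_ ih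
      rw [pow_succ]
      nlinarith [pow_pos (show (0:ℝ) < 3 / 4 by norm_num) n]
  intro l hl g
  obtain ⟨n, hn⟩ := exists_pow_lt_of_lt_one (show (0:ℝ) < 2 * l by linarith)
    (by norm_num : (3 / 4 : ℝ) < 1)
  exact aux_extend hacc (by positivity) hl hn (base n) g

set_option maxHeartbeats 1000000 in
/-- If `S : H → K` is a continuous linear bijection and `B̃` is m-accretive on `K`, then
`B := S* ∘ B̃ ∘ S` with domain `{u : Su ∈ dom B̃}` is m-accretive on `H`. -/
theorem stmt_13 {H K : Type*} [NormedAddCommGroup H] [InnerProductSpace ℝ H] [CompleteSpace H]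
    [NormedAddCommGroup K] [InnerProductSpace ℝ K] [CompleteSpace K]
    (S : H →L[ℝ] K) (hS : Function.Bijective S)
    (domBt : Set K) (Bt : K → K)
    (hacc : ∀ u ∈ domBt, ∀ v ∈ domBt, 0 ≤ ⟪Bt u - Bt v, u - v⟫)
    (honto : ∀ f : K, ∃ u ∈ domBt, u + Bt u = f) :
    (∀ u ∈ {u : H | S u ∈ domBt}, ∀ v ∈ {u : H | S u ∈ domBt},
      0 ≤ ⟪ContinuousLinearMap.adjoint S (Bt (S u)) - ContinuousLinearMap.adjoint S (Bt (S v)),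
            u - v⟫) ∧
    (∀ f : H, ∃ u ∈ {u : H | S u ∈ domBt},
      u + ContinuousLinearMap.adjoint S (Bt (S u)) = f) := by
  classical
  constructor
  · intro u hu v hv
    have heq : ⟪ContinuousLinearMap.adjoint S (Bt (S u)) -
        ContinuousLinearMap.adjoint S (Bt (S v)), u - v⟫
        = ⟪Bt (S u) - Bt (S v), S u - S v⟫ := by
      rw [← map_sub, ContinuousLinearMap.adjoint_inner_left, map_sub]
    rw [heq]; exact hacc _ hu _ hv
  · intro f
    -- set up the inverse equivalence and adjoints, then make them opaque
    obtain ⟨Ei, Sd, Ti, hSEi, hEiS, hSdTi, hTiadj⟩ :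
        ∃ (Ei : K →L[ℝ] H) (Sd : K →L[ℝ] H) (Ti : H →L[ℝ] K),
          (∀ x : K, S (Ei x) = x) ∧ (∀ x : H, Ei (S x) = x) ∧
          (∀ x : H, Sd (Ti x) = x) ∧
          (Sd = ContinuousLinearMap.adjoint S ∧
            ∀ (x : K) (y : H), ⟪Ti y, x⟫ = ⟪y, Ei x⟫) := by
      set E : H ≃L[ℝ] K := ContinuousLinearEquiv.ofBijective S
        (LinearMap.ker_eq_bot.mpr hS.1) (LinearMap.range_eq_top.mpr hS.2) with hEdef
      have hE : ∀ x : H, E x = S x := fun x => rfl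
      refine ⟨(E.symm : K →L[ℝ] H), ContinuousLinearMap.adjoint S,
        ContinuousLinearMap.adjoint (E.symm : K →L[ℝ] H), ?_, ?_, ?_, rfl, ?_⟩
      · intro x
        have := E.apply_symm_apply x
        rwa [hE] at this
      · intro x
        have := E.symm_apply_apply x
        rwa [← hE]
      · have hc : (E.symm : K →L[ℝ] H) ∘L S = ContinuousLinearMap.id ℝ H := by
          ext x
          show E.symm (S x) = x
          rw [← hE x]
          exact E.symm_apply_apply x
        have h2 := congrArg ContinuousLinearMap.adjoint hc
        rw [ContinuousLinearMap.adjoint_comp, ContinuousLinearMap.adjoint_id] at h2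
        intro x
        calc ContinuousLinearMap.adjoint S (ContinuousLinearMap.adjoint
              (E.symm : K →L[ℝ] H) x)
            = (ContinuousLinearMap.adjoint S ∘L ContinuousLinearMap.adjoint
              (E.symm : K →L[ℝ] H)) x := rfl
          _ = x := by rw [h2]; rfl
      · intro x y
        exact ContinuousLinearMap.adjoint_inner_left (E.symm : K →L[ℝ] H) x y
    obtain ⟨hSdadj, hTi⟩ := hTiadj
    -- the operator A = (S S*)⁻¹ = Ti ∘ Ei
    set A : K →L[ℝ] K := Ti ∘L Ei with hA
    have hAapp : ∀ x : K, A x = Ti (Ei x) := fun _ => rfl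
    -- coercivity constant
    obtain ⟨c, hcpos, hc1, hcoer⟩ : ∃ c : ℝ, 0 < c ∧ c ≤ 1 ∧
        ∀ x : K, c * ‖x‖ ^ 2 ≤ ⟪A x, x⟫ := by
      refine ⟨1 / (‖S‖ ^ 2 + 1), by positivity, ?_, ?_⟩
      · rw [div_le_one (by positivity)]
        nlinarith [norm_nonneg S]
      · intro x
        have h1 : ⟪A x, x⟫ = ‖Ei x‖ ^ 2 := by
          rw [hAapp, hTi x (Ei x), real_inner_self_eq_norm_sq]
        have h2 : ‖x‖ ≤ ‖S‖ * ‖Ei x‖ := by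
          conv_lhs => rw [← hSEi x]
          exact S.le_opNorm _
        have h3 : ‖x‖ ^ 2 ≤ (‖S‖ ^ 2 + 1) * ‖Ei x‖ ^ 2 := by
          nlinarith [norm_nonneg x, norm_nonneg (Ei x), norm_nonneg S]
        rw [h1, div_mul_eq_mul_div, div_le_iff₀ (by positivity)]
        nlinarith [norm_nonneg (Ei x)]
    have hAd : ∀ d : K, ‖A d‖ ≤ ‖A‖ * ‖d‖ := fun d => A.le_opNorm d
    obtain ⟨nA, hnA0, hAd⟩ : ∃ nA : ℝ, 0 ≤ nA ∧ ∀ d : K, ‖A d‖ ≤ nA * ‖d‖ :=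
      ⟨‖A‖, norm_nonneg A, hAd⟩
    -- choose the parameter lam and the contraction constant k
    obtain ⟨lam, k, hlampos, hlamc, hlamA, hk2, hknn, hklt⟩ :
        ∃ lam k : ℝ, 0 < lam ∧ lam * c ≤ 1 ∧ lam * nA ^ 2 ≤ c ∧
          k ^ 2 = 1 - lam * c ∧ 0 ≤ k ∧ k < 1 := by
      refine ⟨c / (nA ^ 2 + 1), Real.sqrt (1 - (c / (nA ^ 2 + 1)) * c), by positivity,
        ?_, ?_, ?_, Real.sqrt_nonneg _, ?_⟩
      · have h1 : c / (nA ^ 2 + 1) ≤ c := by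
          rw [div_le_iff₀ (by positivity)]
          nlinarith
        nlinarith
      · rw [div_mul_eq_mul_div, div_le_iff₀ (by positivity)]
        nlinarith
      · refine Real.sq_sqrt ?_
        have h1 : c / (nA ^ 2 + 1) ≤ c := by
          rw [div_le_iff₀ (by positivity)]
          nlinarith
        nlinarith
      · have h1 : c / (nA ^ 2 + 1) * c > 0 := by positivity
        have h2 : c / (nA ^ 2 + 1) ≤ c := by
          rw [div_le_iff₀ (by positivity)]
          nlinarith
        have h3 : Real.sqrt (1 - (c / (nA ^ 2 + 1)) * c) < Real.sqrt 1 := by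
          apply Real.sqrt_lt_sqrt (by nlinarith)
          linarith
        rwa [Real.sqrt_one] at h3
    -- the contraction estimate for I - lam • A
    have hcontr : ∀ d : K, ‖d - lam • A d‖ ≤ k * ‖d‖ := by
      intro d
      have hexp : ‖d - lam • A d‖ ^ 2
          = ‖d‖ ^ 2 - 2 * (lam * ⟪A d, d⟫) + lam ^ 2 * ‖A d‖ ^ 2 := by
        rw [norm_sub_sq_real, real_inner_smul_right, norm_smul, Real.norm_eq_abs,
          abs_of_pos hlampos, real_inner_comm, mul_pow]
        try ring
      have hAd' := hAd d
      have hco := hcoer d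
      have hle : ‖d - lam • A d‖ ^ 2 ≤ (k * ‖d‖) ^ 2 := by
        rw [hexp, mul_pow, hk2]
        have hlam2 : lam ^ 2 * nA ^ 2 ≤ lam * c := by nlinarith
        have e1 : ‖A d‖ ^ 2 ≤ nA ^ 2 * ‖d‖ ^ 2 := by
          nlinarith [norm_nonneg (A d), mul_nonneg hnA0 (norm_nonneg d)]
        have e2 : lam ^ 2 * ‖A d‖ ^ 2 ≤ lam * c * ‖d‖ ^ 2 := by
          nlinarith [mul_le_mul_of_nonneg_left e1 (sq_nonneg lam),
            mul_le_mul_of_nonneg_right hlam2 (sq_nonneg ‖d‖)]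
        have e3 : 2 * lam * (c * ‖d‖ ^ 2) ≤ 2 * lam * ⟪A d, d⟫ :=
          mul_le_mul_of_nonneg_left hco (by linarith)
        nlinarith [e2, e3]
      have h6 : 0 ≤ k * ‖d‖ := mul_nonneg hknn (norm_nonneg d)
      nlinarith [norm_nonneg (d - lam • A d)]
    -- resolvent at lam
    obtain ⟨J, hJmem, hJeq⟩ : ∃ J : K → K, (∀ g, J g ∈ domBt) ∧
        (∀ g, J g + lam • Bt (J g) = g) := by
      choose J h1 h2 using aux_all hacc honto lam hlampos
      exact ⟨J, h1, h2⟩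
    have hnonexp : ∀ a b : K, ‖J a - J b‖ ≤ ‖a - b‖ := by
      intro a b
      have := aux_nonexp hacc hlampos.le (hJmem a) (hJmem b)
      rwa [hJeq, hJeq] at this
    -- the fixed point map
    set Ψ : K → K := fun w => w - lam • A w + lam • Ti f with hΨ
    set Φ : K → K := fun w => J (Ψ w) with hΦ
    have hlip : LipschitzWith ⟨k, hknn⟩ Φ := by
      apply LipschitzWith.of_dist_le_mul
      intro a b
      simp only [hΦ, dist_eq_norm, NNReal.coe_mk]
      calc ‖J (Ψ a) - J (Ψ b)‖ ≤ ‖Ψ a - Ψ b‖ := hnonexp _ _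
        _ ≤ k * ‖a - b‖ := by
            have hd : Ψ a - Ψ b = (a - b) - lam • A (a - b) := by
              simp only [hΨ, map_sub, smul_sub]; abel
            rw [hd]; exact hcontr _
    have hcw : ContractingWith ⟨k, hknn⟩ Φ := ⟨by exact_mod_cast hklt, hlip⟩
    haveI : Nonempty K := ⟨0⟩
    set w := ContractingWith.fixedPoint Φ hcw with hwdef
    have hw : Φ w = w := hcw.fixedPoint_isFixedPt
    have hwmem : w ∈ domBt := by rw [← hw]; exact hJmem _
    have heq : w + lam • Bt w = Ψ w := by
      conv_lhs => rw [← hw]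
      simp only [hΦ]
      exact hJeq _
    have hBt : Bt w = Ti f - A w := by
      have h1 : lam • Bt w = lam • (Ti f - A w) := by
        have h2 : lam • Bt w = Ψ w - w := by rw [← heq]; abel
        rw [h2]
        simp only [hΨ, smul_sub]
        abel
      exact smul_right_injective K (ne_of_gt hlampos) h1
    refine ⟨Ei w, ?_, ?_⟩
    · show S (Ei w) ∈ domBt
      rw [hSEi w]
      exact hwmem
    · rw [hSEi w, hBt, ← hSdadj, map_sub, hSdTi, hAapp, hSdTi]
      abel
end

section
/- Let B : dom(B) ⊆ H → H be m-accretive and let T : H → H be Lipschitz continuous and accretive (⟨T(u)−T(v), u−v⟩ ≥ 0 for all u, v ∈ H). Then the mapping u ↦ T(u) + B(u) with domain dom(B) is m-accretive. -/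
open scoped RealInnerProductSpace

/-- If `B` is m-accretive and `T : H → H` is Lipschitz continuous and accretive, then
`T + B` (with domain `dom B`) is m-accretive. -/
theorem stmt_14 {H : Type*} [NormedAddCommGroup H] [InnerProductSpace ℝ H] [CompleteSpace H]
    (domB : Set H) (B : H → H)
    (hBacc : ∀ u ∈ domB, ∀ v ∈ domB, 0 ≤ ⟪B u - B v, u - v⟫)
    (hBonto : ∀ f : H, ∃ u ∈ domB, u + B u = f)
    (T : H → H) (L : NNReal) (hTlip : LipschitzWith L T)
    (hTacc : ∀ u v : H, 0 ≤ ⟪T u - T v, u - v⟫) :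
    (∀ u ∈ domB, ∀ v ∈ domB, 0 ≤ ⟪(T u + B u) - (T v + B v), u - v⟫) ∧
    (∀ f : H, ∃ u ∈ domB, u + (T u + B u) = f) := by
  constructor
  · intro u hu v hv
    have h1 := hBacc u hu v hv
    have h2 := hTacc u v
    have hx : (T u + B u) - (T v + B v) = (T u - T v) + (B u - B v) := by abel
    rw [hx, inner_add_left]
    linarith
  -- Surjectivity part
  -- nonexpansiveness of the resolvent of t•T + B for t ≥ 0
  have nonexp : ∀ t : ℝ, 0 ≤ t → ∀ u ∈ domB, ∀ v ∈ domB,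
      ‖u - v‖ ≤ ‖(u + t • T u + B u) - (v + t • T v + B v)‖ := by
    intro t ht u hu v hv
    have hX : (u + t • T u + B u) - (v + t • T v + B v)
        = (u - v) + t • (T u - T v) + (B u - B v) := by
      rw [smul_sub]; abel
    have h1 : ‖u - v‖ ^ 2 ≤ ⟪(u + t • T u + B u) - (v + t • T v + B v), u - v⟫ := by
      rw [hX, inner_add_left, inner_add_left, real_inner_smul_left,
        real_inner_self_eq_norm_sq]
      have hT := hTacc u v
      have hB := hBacc u hu v hv
      nlinarith
    have h2 := real_inner_le_norm ((u + t • T u + B u) - (v + t • T v + B v)) (u - v)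
    rcases eq_or_lt_of_le (norm_nonneg (u - v)) with h | h
    · rw [← h]; exact norm_nonneg _
    · nlinarith
  -- the continuation step
  have step : ∀ t : ℝ, 0 ≤ t → (∀ f, ∃ u ∈ domB, u + t • T u + B u = f) →
      ∀ s : ℝ, |s - t| * L < 1 → ∀ f, ∃ u ∈ domB, u + s • T u + B u = f := by
    intro t ht hPt s hs f
    choose R hRmem hReq using hPt
    have hRnon : ∀ x y : H, ‖R x - R y‖ ≤ ‖x - y‖ := by
      intro x y
      calc ‖R x - R y‖
          ≤ ‖(R x + t • T (R x) + B (R x)) - (R y + t • T (R y) + B (R y))‖ :=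
            nonexp t ht _ (hRmem x) _ (hRmem y)
        _ = ‖x - y‖ := by rw [hReq, hReq]
    set K : NNReal := ⟨|t - s|, abs_nonneg _⟩ * L with hK
    have hKcoe : (K : ℝ) = |t - s| * L := by rw [hK]; exact (NNReal.coe_mul _ _).trans rfl
    set Φ : H → H := fun u => R (f + (t - s) • T u) with hΦ
    have hΦlip : LipschitzWith K Φ := by
      apply LipschitzWith.of_dist_le_mul
      intro u v
      have h1 : dist (Φ u) (Φ v) ≤ ‖(f + (t - s) • T u) - (f + (t - s) • T v)‖ := by
        rw [dist_eq_norm]; exact hRnon _ _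
      have heq : (f + (t - s) • T u) - (f + (t - s) • T v) = (t - s) • (T u - T v) := by
        rw [smul_sub]; abel
      rw [heq, norm_smul, Real.norm_eq_abs] at h1
      have hT := hTlip.dist_le_mul u v
      simp only [dist_eq_norm] at hT h1 ⊢
      rw [hKcoe]
      calc ‖Φ u - Φ v‖ ≤ |t - s| * ‖T u - T v‖ := h1
        _ ≤ |t - s| * ((L : ℝ) * ‖u - v‖) :=
            mul_le_mul_of_nonneg_left hT (abs_nonneg _)
        _ = |t - s| * L * ‖u - v‖ := by ring
    have hK1 : K < 1 := by
      rw [← NNReal.coe_lt_coe, hKcoe, NNReal.coe_one, abs_sub_comm]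
      exact hs
    have hc : ContractingWith K Φ := ⟨hK1, hΦlip⟩
    have : Nonempty H := ⟨0⟩
    set u := hc.fixedPoint Φ with hu
    have hfix : Φ u = u := hc.fixedPoint_isFixedPt
    refine ⟨u, ?_, ?_⟩
    · rw [← hfix]; exact hRmem _
    · have heq := hReq (f + (t - s) • T u)
      rw [show R (f + (t - s) • T u) = u from hfix] at heq
      have hrw : u + s • T u + B u = (u + t • T u + B u) - (t - s) • T u := by
        rw [sub_smul]; abel
      rw [hrw, heq]
      abel
  -- induction along t = n * ε
  intro f
  set ε : ℝ := 1 / (2 * ((L : ℝ) + 1)) with hε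
  have hLnn : (0 : ℝ) ≤ L := L.coe_nonneg
  have hεpos : 0 < ε := by positivity
  have hεL : ε * L < 1 := by
    rw [hε]
    rw [div_mul_eq_mul_div, one_mul, div_lt_one (by positivity)]
    nlinarith
  have main : ∀ n : ℕ, ∀ g : H, ∃ u ∈ domB, u + (min 1 ((n : ℝ) * ε)) • T u + B u = g := by
    intro n
    induction n with
    | zero =>
      intro g
      obtain ⟨u, hu, huf⟩ := hBonto g
      exact ⟨u, hu, by simpa using huf⟩
    | succ n ih =>
      have hnn : 0 ≤ min 1 ((n : ℝ) * ε) := le_min one_pos.le (by positivity)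
      apply step _ hnn ih
      have h1 : min 1 ((n : ℝ) * ε) ≤ min 1 (((n : ℕ) + 1 : ℝ) * ε) := by
        apply min_le_min le_rfl
        nlinarith
      have h2 : min 1 (((n : ℕ) + 1 : ℝ) * ε) - min 1 ((n : ℝ) * ε) ≤ ε := by
        rcases le_total 1 ((n : ℝ) * ε) with h | h
        · have hm : min 1 ((n : ℝ) * ε) = 1 := min_eq_left h
          have := min_le_left (1 : ℝ) (((n : ℕ) + 1 : ℝ) * ε)
          rw [hm]; linarith
        · have hm : min 1 ((n : ℝ) * ε) = (n : ℝ) * ε := min_eq_right h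
          have := min_le_right (1 : ℝ) (((n : ℕ) + 1 : ℝ) * ε)
          rw [hm]; nlinarith
      have habs : |min 1 (((n : ℕ) + 1 : ℝ) * ε) - min 1 ((n : ℝ) * ε)| ≤ ε := by
        rw [abs_of_nonneg (by linarith)]
        exact h2
      have hfin : |min 1 ((((n + 1) : ℕ) : ℝ) * ε) - min 1 ((n : ℝ) * ε)| * L < 1 := by
        push_cast
        calc |min 1 (((n : ℕ) + 1 : ℝ) * ε) - min 1 ((n : ℝ) * ε)| * L ≤ ε * L :=
              mul_le_mul_of_nonneg_right habs hLnn
          _ < 1 := hεL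
      exact hfin
  obtain ⟨n, hn⟩ := exists_nat_ge (1 / ε)
  have hge : (1 : ℝ) ≤ (n : ℝ) * ε := by
    rw [div_le_iff₀ hεpos] at hn
    linarith
  obtain ⟨u, hu, hueq⟩ := main n f
  rw [min_eq_left hge, one_smul] at hueq
  exact ⟨u, hu, by rw [← add_assoc]; exact hueq⟩
end

section
/- Let a, b ∈ ℝ with a < b, let d ∈ ℕ, let f : [a,b] → ℝ^d be square integrable, and let ρ > 0. Then ∫_a^b ‖∫_a^t f(s) ds‖² e^{−2ρt} dt ≤ ((b−a)/(2ρ)) ∫_a^b ‖f(s)‖² e^{−2ρs} ds. -/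
open MeasureTheory

/-- Weighted integral estimate for the Volterra operator:
`∫_a^b ‖∫_a^t f‖² e^{-2ρt} dt ≤ (b-a)/(2ρ) ∫_a^b ‖f(s)‖² e^{-2ρs} ds`. -/
theorem stmt_15 (a b : ℝ) (hab : a < b) (d : ℕ) (f : ℝ → EuclideanSpace ℝ (Fin d))
    (hf : MemLp f 2 (volume.restrict (Set.Icc a b))) (ρ : ℝ) (hρ : 0 < ρ) :
    ∫ t in a..b, ‖∫ s in a..t, f s‖ ^ 2 * Real.exp (-2 * ρ * t) ≤
      ((b - a) / (2 * ρ)) * ∫ s in a..b, ‖f s‖ ^ 2 * Real.exp (-2 * ρ * s) := by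
  set C := ∫ s in a..b, ‖f s‖ ^ 2 * Real.exp (-2 * ρ * s) with hCdef
  have hC0 : 0 ≤ C := by
    apply intervalIntegral.integral_nonneg hab.le
    intro s _; positivity
  -- integrability of the weighted square on Icc a b
  have hsq : Integrable (fun s => ‖f s‖ ^ 2) (volume.restrict (Set.Icc a b)) :=
    hf.norm.integrable_sq
  have hexp_cont : Continuous fun s : ℝ => Real.exp (-2 * ρ * s) := by fun_prop
  have hInt : IntegrableOn (fun s => ‖f s‖ ^ 2 * Real.exp (-2 * ρ * s)) (Set.Icc a b) := by
    have h := Integrable.bdd_mul (c := Real.exp (-2 * ρ * a)) hsq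
      hexp_cont.aestronglyMeasurable ?_
    · exact h.congr (Filter.Eventually.of_forall fun x => mul_comm _ _)
    · rw [ae_restrict_iff' measurableSet_Icc]
      filter_upwards with s hs
      rw [Real.norm_of_nonneg (Real.exp_pos _).le]
      exact Real.exp_le_exp.mpr (by nlinarith [hs.1])
  -- pointwise bound
  have key : ∀ t ∈ Set.Ioc a b,
      ‖∫ s in a..t, f s‖ ^ 2 * Real.exp (-2 * ρ * t) ≤ C / (2 * ρ) := by
    intro t ht
    have hat : a ≤ t := ht.1.le
    have hIoc_sub : Set.Ioc a t ⊆ Set.Icc a b := fun s hs => ⟨hs.1.le, hs.2.trans ht.2⟩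
    have hfI : MemLp f 2 (volume.restrict (Set.Ioc a t)) :=
      hf.mono_measure (Measure.restrict_mono hIoc_sub le_rfl)
    haveI : IsFiniteMeasure (volume.restrict (Set.Ioc a t)) :=
      ⟨by rw [Measure.restrict_apply_univ]; exact measure_Ioc_lt_top⟩
    have hGcont : Continuous fun s : ℝ => Real.exp (-ρ * s) := by fun_prop
    have hG : MemLp (fun s => ‖f s‖ * Real.exp (-ρ * s)) 2 (volume.restrict (Set.Ioc a t)) := by
      refine MemLp.of_le (hfI.norm.const_mul (Real.exp (-ρ * a)))
        (hfI.aestronglyMeasurable.norm.mul hGcont.aestronglyMeasurable) ?_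
      rw [ae_restrict_iff' measurableSet_Ioc]
      filter_upwards with s hs
      rw [Real.norm_of_nonneg (by positivity), Real.norm_of_nonneg (by positivity)]
      have h1 : Real.exp (-ρ * s) ≤ Real.exp (-ρ * a) :=
        Real.exp_le_exp.mpr (by nlinarith [hs.1.le])
      nlinarith [norm_nonneg (f s), Real.exp_pos (-ρ * s)]
    have hgcont : Continuous fun s : ℝ => Real.exp (ρ * s) := by fun_prop
    have hg : MemLp (fun s => Real.exp (ρ * s)) 2 (volume.restrict (Set.Ioc a t)) := by
      refine MemLp.of_bound hgcont.aestronglyMeasurable (Real.exp (ρ * t)) ?_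
      rw [ae_restrict_iff' measurableSet_Ioc]
      filter_upwards with s hs
      rw [Real.norm_of_nonneg (Real.exp_pos _).le]
      exact Real.exp_le_exp.mpr (by nlinarith [hs.2])
    have hpq : Real.HolderConjugate 2 2 := Real.HolderConjugate.two_two
    have h2eq : ENNReal.ofReal (2:ℝ) = (2 : ENNReal) := by norm_num
    have hHold := integral_mul_le_Lp_mul_Lq_of_nonneg hpq
      (f := fun s => ‖f s‖ * Real.exp (-ρ * s)) (g := fun s => Real.exp (ρ * s))
      (μ := volume.restrict (Set.Ioc a t))
      (Filter.Eventually.of_forall fun s => by positivity)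
      (Filter.Eventually.of_forall fun s => (Real.exp_pos _).le)
      (by rw [h2eq]; exact hG) (by rw [h2eq]; exact hg)
    -- rewrite the three integrals in hHold
    have hXeq : ∫ s in Set.Ioc a t, (‖f s‖ * Real.exp (-ρ * s)) ^ (2 : ℝ) =
        ∫ s in Set.Ioc a t, ‖f s‖ ^ 2 * Real.exp (-2 * ρ * s) := by
      refine integral_congr_ae (Filter.Eventually.of_forall fun s => ?_)
      beta_reduce
      rw [Real.rpow_two, mul_pow, sq (Real.exp _), ← Real.exp_add]
      ring_nf
    have hYeq : ∫ s in Set.Ioc a t, (Real.exp (ρ * s)) ^ (2 : ℝ) =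
        ∫ s in Set.Ioc a t, Real.exp (2 * ρ * s) := by
      refine integral_congr_ae (Filter.Eventually.of_forall fun s => ?_)
      beta_reduce
      rw [Real.rpow_two, sq, ← Real.exp_add]
      ring_nf
    have hprodeq : ∫ s in Set.Ioc a t, (fun s => ‖f s‖ * Real.exp (-ρ * s)) s *
        (fun s => Real.exp (ρ * s)) s = ∫ s in a..t, ‖f s‖ := by
      rw [intervalIntegral.integral_of_le hat]
      refine integral_congr_ae (Filter.Eventually.of_forall fun s => ?_)
      simp only
      rw [mul_assoc, ← Real.exp_add]
      simp
    set X := ∫ s in Set.Ioc a t, ‖f s‖ ^ 2 * Real.exp (-2 * ρ * s) with hXdef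
    set Y := ∫ s in Set.Ioc a t, Real.exp (2 * ρ * s) with hYdef
    have hX0 : 0 ≤ X := setIntegral_nonneg measurableSet_Ioc fun s _ => by positivity
    have hY0 : 0 ≤ Y := setIntegral_nonneg measurableSet_Ioc fun s _ => (Real.exp_pos _).le
    rw [hprodeq, hXeq, hYeq] at hHold
    -- X ≤ C
    have hXC : X ≤ C := by
      rw [hCdef, intervalIntegral.integral_of_le hab.le]
      refine setIntegral_mono_set (hInt.mono_set Set.Ioc_subset_Icc_self)
        ?_ (HasSubset.Subset.eventuallyLE (Set.Ioc_subset_Ioc_right ht.2))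
      filter_upwards with s using by positivity
    -- Y computation
    have hYval : Y = (Real.exp (2 * ρ * t) - Real.exp (2 * ρ * a)) / (2 * ρ) := by
      rw [hYdef, ← intervalIntegral.integral_of_le hat]
      have hderiv : ∀ s ∈ Set.uIcc a t,
          HasDerivAt (fun u => Real.exp (2 * ρ * u) / (2 * ρ)) (Real.exp (2 * ρ * s)) s := by
        intro s _
        have h1 : HasDerivAt (fun u : ℝ => 2 * ρ * u) (2 * ρ) s := by
          simpa using (hasDerivAt_id s).const_mul (2 * ρ)
        have h2 := h1.exp.div_const (2 * ρ)
        rw [mul_div_assoc, div_self (by positivity : (2 * ρ : ℝ) ≠ 0), mul_one] at h2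
        exact h2
      rw [intervalIntegral.integral_eq_sub_of_hasDerivAt hderiv
        ((Real.continuous_exp.comp (by fun_prop)).intervalIntegrable a t)]
      ring
    -- combine
    have hN : ‖∫ s in a..t, f s‖ ≤ X ^ (1/2 : ℝ) * Y ^ (1/2 : ℝ) :=
      (intervalIntegral.norm_integral_le_integral_norm hat).trans hHold
    have hNsq : ‖∫ s in a..t, f s‖ ^ 2 ≤ X * Y := by
      have := pow_le_pow_left₀ (norm_nonneg _) hN 2
      refine this.trans_eq ?_
      rw [mul_pow, ← Real.rpow_natCast (X ^ (1/2 : ℝ)) 2, ← Real.rpow_natCast (Y ^ (1/2 : ℝ)) 2,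
        ← Real.rpow_mul hX0, ← Real.rpow_mul hY0]
      norm_num
    have hE1 : Real.exp (2 * ρ * t) * Real.exp (-2 * ρ * t) = 1 := by
      rw [← Real.exp_add]
      norm_num
    have hEpos := Real.exp_pos (-2 * ρ * t)
    have hBpos := Real.exp_pos (2 * ρ * a)
    calc ‖∫ s in a..t, f s‖ ^ 2 * Real.exp (-2 * ρ * t)
        ≤ (X * Y) * Real.exp (-2 * ρ * t) := by
          exact mul_le_mul_of_nonneg_right hNsq hEpos.le
      _ ≤ (C * Y) * Real.exp (-2 * ρ * t) := by
          refine mul_le_mul_of_nonneg_right (mul_le_mul_of_nonneg_right hXC hY0) hEpos.le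
      _ ≤ C / (2 * ρ) := by
          rw [hYval]
          have heq : C * ((Real.exp (2 * ρ * t) - Real.exp (2 * ρ * a)) / (2 * ρ)) *
              Real.exp (-2 * ρ * t) = C / (2 * ρ) *
              ((Real.exp (2 * ρ * t) - Real.exp (2 * ρ * a)) * Real.exp (-2 * ρ * t)) := by
            ring
          rw [heq]
          have h1 : (Real.exp (2 * ρ * t) - Real.exp (2 * ρ * a)) * Real.exp (-2 * ρ * t) ≤ 1 := by
            nlinarith [mul_pos hBpos hEpos]
          have hC2 : 0 ≤ C / (2 * ρ) := div_nonneg hC0 (by positivity)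
          nlinarith [mul_le_mul_of_nonneg_left h1 hC2]
  have habs : ‖∫ t in a..b, ‖∫ s in a..t, f s‖ ^ 2 * Real.exp (-2 * ρ * t)‖ ≤
      (C / (2 * ρ)) * |b - a| := by
    apply intervalIntegral.norm_integral_le_of_norm_le_const
    intro t ht
    rw [Set.uIoc_of_le hab.le] at ht
    rw [Real.norm_of_nonneg (by positivity)]
    exact key t ht
  calc ∫ t in a..b, ‖∫ s in a..t, f s‖ ^ 2 * Real.exp (-2 * ρ * t)
      ≤ ‖∫ t in a..b, ‖∫ s in a..t, f s‖ ^ 2 * Real.exp (-2 * ρ * t)‖ := Real.le_norm_self _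
    _ ≤ (C / (2 * ρ)) * |b - a| := habs
    _ = ((b - a) / (2 * ρ)) * C := by rw [abs_of_pos (by linarith)]; ring
end

section
/- Let a, b ∈ ℝ with a < b, let n, d ∈ ℕ with n ≥ 1, and let P₀, P₁, …, Pₙ ∈ ℝ^{d×d} satisfy Pⱼᵀ = (−1)^{j+1} Pⱼ for j = 0, …, n. Define Q ∈ ℝ^{nd×nd} as the n×n block matrix whose (i,j)-th d×d block (1 ≤ i, j ≤ n) equals (−1)^{i+1} P_{i+j−1} if i + j − 1 ≤ n and 0 otherwise, and for t ∈ [a,b] and an n-times continuously differentiable u : [a,b] → ℝ^d set tr_t u := (u(t), u'(t), …, u^{(n−1)}(t)) ∈ ℝ^{nd}. Then for all n-times continuously differentiable u, v : [a,b] → ℝ^d one has ∑_{k=0}^{n} ∫_a^b ⟨P_k u^{(k)}(t), v(t)⟩ dt + ∫_a^b ⟨u(t), ∑_{k=0}^{n} P_k v^{(k)}(t)⟩ dt = ⟨Q tr_b u, tr_b v⟩ − ⟨Q tr_a u, tr_a v⟩. -/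
open Finset MeasureTheory intervalIntegral

lemma aux_hasDeriv_dot {d : ℕ} (M : Matrix (Fin d) (Fin d) ℝ)
    {f g : ℝ → Fin d → ℝ} {f' g' : Fin d → ℝ} {s : Set ℝ} {t : ℝ}
    (hf : HasDerivWithinAt f f' s t) (hg : HasDerivWithinAt g g' s t) :
    HasDerivWithinAt (fun τ => dotProduct (M.mulVec (f τ)) (g τ))
      (dotProduct (M.mulVec f') (g t) + dotProduct (M.mulVec (f t)) g') s t := by
  have hfc : ∀ l, HasDerivWithinAt (fun τ => f τ l) (f' l) s t := hasDerivWithinAt_pi.mp hf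
  have hgc : ∀ l, HasDerivWithinAt (fun τ => g τ l) (g' l) s t := hasDerivWithinAt_pi.mp hg
  simp only [dotProduct, Matrix.mulVec, ← Finset.sum_add_distrib]
  apply HasDerivWithinAt.fun_sum
  intro k _
  have h1 : HasDerivWithinAt (fun τ => ∑ l, M k l * f τ l) (∑ l, M k l * f' l) s t :=
    HasDerivWithinAt.fun_sum fun l _ => (hfc l).const_mul _
  exact h1.mul (hgc k)

lemma aux_cont_dot {d : ℕ} (M : Matrix (Fin d) (Fin d) ℝ)
    {f g : ℝ → Fin d → ℝ} {s : Set ℝ}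
    (hf : ContinuousOn f s) (hg : ContinuousOn g s) :
    ContinuousOn (fun τ => dotProduct (M.mulVec (f τ)) (g τ)) s := by
  simp only [dotProduct, Matrix.mulVec]
  apply continuousOn_finset_sum
  intro k _
  exact (continuousOn_finset_sum _ fun l _ =>
    ((continuous_apply l).comp_continuousOn hf).const_smul (M k l)).mul
    ((continuous_apply k).comp_continuousOn hg)

lemma aux_tri (n : ℕ) (g : ℕ → ℕ → ℝ) :
    ∑ i ∈ Finset.range n, ∑ j ∈ Finset.range (n - i), (g i (j+1) - g (i+1) j)
      = ∑ j ∈ Finset.range (n+1), g 0 j - ∑ i ∈ Finset.range (n+1), g i 0 := by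
  have A : ∑ i ∈ Finset.range n, ∑ j ∈ Finset.range (n - i), g i (j+1)
      = (∑ i ∈ Finset.range (n+1), ∑ j ∈ Finset.range (n+1-i), g i j)
        - ∑ i ∈ Finset.range (n+1), g i 0 := by
    have h1 : ∀ i ∈ Finset.range n, ∑ j ∈ Finset.range (n - i), g i (j+1)
        = ∑ j ∈ Finset.range (n+1-i), g i j - g i 0 := by
      intro i hi
      simp only [Finset.mem_range] at hi
      have h : n + 1 - i = (n - i) + 1 := by omega
      rw [h, Finset.sum_range_succ']
      ring
    rw [Finset.sum_congr rfl h1, Finset.sum_sub_distrib,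
      Finset.sum_range_succ (fun i => ∑ j ∈ Finset.range (n+1-i), g i j) n]
    have h : n + 1 - n = 1 := by omega
    rw [h, Finset.sum_range_one, Finset.sum_range_succ (fun i => g i 0) n]
    ring
  have B : ∑ i ∈ Finset.range n, ∑ j ∈ Finset.range (n - i), g (i+1) j
      = (∑ i ∈ Finset.range (n+1), ∑ j ∈ Finset.range (n+1-i), g i j)
        - ∑ j ∈ Finset.range (n+1), g 0 j := by
    have h2 := Finset.sum_range_succ' (fun i => ∑ j ∈ Finset.range (n+1-i), g i j) n
    have h3 : ∀ i, n + 1 - (i+1) = n - i := fun i => by omega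
    simp only [h3, Nat.sub_zero] at h2
    rw [h2]
    ring
  rw [Finset.sum_congr rfl (fun i _ => Finset.sum_sub_distrib _ _), Finset.sum_sub_distrib, A, B]
  ring

/-- Integration by parts for the port-Hamiltonian operator:
`∑ₖ ∫⟨Pₖ u⁽ᵏ⁾, v⟩ + ∫⟨u, ∑ₖ Pₖ v⁽ᵏ⁾⟩ = ⟨Q tr_b u, tr_b v⟩ − ⟨Q tr_a u, tr_a v⟩`. -/
theorem stmt_18 (a b : ℝ) (hab : a < b) (n d : ℕ) (hn : 1 ≤ n)
    (P : Fin (n + 1) → Matrix (Fin d) (Fin d) ℝ)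
    (hP : ∀ j : Fin (n + 1), (P j).transpose = ((-1 : ℝ) ^ ((j : ℕ) + 1)) • P j)
    (Q : Matrix (Fin n × Fin d) (Fin n × Fin d) ℝ)
    (hQ : ∀ (i j : Fin n) (k l : Fin d),
      Q (i, k) (j, l) =
        if h : (i : ℕ) + (j : ℕ) + 1 ≤ n then
          ((-1 : ℝ) ^ (i : ℕ)) * P ⟨(i : ℕ) + (j : ℕ) + 1, by omega⟩ k l
        else 0)
    (u v : ℝ → (Fin d → ℝ))
    (hu : ContDiffOn ℝ n u (Set.Icc a b)) (hv : ContDiffOn ℝ n v (Set.Icc a b)) :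
    (∑ k : Fin (n + 1), ∫ t in a..b,
        dotProduct ((P k).mulVec (iteratedDerivWithin (k : ℕ) u (Set.Icc a b) t)) (v t)) +
      (∫ t in a..b, dotProduct (u t)
        (∑ k : Fin (n + 1), (P k).mulVec (iteratedDerivWithin (k : ℕ) v (Set.Icc a b) t))) =
    dotProduct
        (Q.mulVec (fun p : Fin n × Fin d =>
          iteratedDerivWithin (p.1 : ℕ) u (Set.Icc a b) b p.2))
        (fun p : Fin n × Fin d => iteratedDerivWithin (p.1 : ℕ) v (Set.Icc a b) b p.2) -
      dotProduct
        (Q.mulVec (fun p : Fin n × Fin d =>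
          iteratedDerivWithin (p.1 : ℕ) u (Set.Icc a b) a p.2))
        (fun p : Fin n × Fin d => iteratedDerivWithin (p.1 : ℕ) v (Set.Icc a b) a p.2) := by
  classical
  have hab' : a ≤ b := hab.le
  set I : Set ℝ := Set.Icc a b with hIdef
  have hI : UniqueDiffOn ℝ I := uniqueDiffOn_Icc hab
  set Du : ℕ → ℝ → Fin d → ℝ := fun m => iteratedDerivWithin m u I with hDudef
  set Dv : ℕ → ℝ → Fin d → ℝ := fun m => iteratedDerivWithin m v I with hDvdef
  have hDu0 : Du 0 = u := by simp [hDudef]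
  have hDv0 : Dv 0 = v := by simp [hDvdef]
  have hcu : ∀ m : ℕ, m ≤ n → ContinuousOn (Du m) I :=
    fun m hm => hu.continuousOn_iteratedDerivWithin (by exact_mod_cast hm) hI
  have hcv : ∀ m : ℕ, m ≤ n → ContinuousOn (Dv m) I :=
    fun m hm => hv.continuousOn_iteratedDerivWithin (by exact_mod_cast hm) hI
  have hdu : ∀ m : ℕ, m < n → ∀ t ∈ I, HasDerivWithinAt (Du m) (Du (m+1) t) I t := by
    intro m hm t ht
    have h1 := (hu.differentiableOn_iteratedDerivWithin
      (show (m : WithTop ℕ∞) < n by exact_mod_cast hm) hI t ht).hasDerivWithinAt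
    have h2 : Du (m+1) t = derivWithin (iteratedDerivWithin m u I) I t :=
      congrFun iteratedDerivWithin_succ t
    rw [h2]; exact h1
  have hdv : ∀ m : ℕ, m < n → ∀ t ∈ I, HasDerivWithinAt (Dv m) (Dv (m+1) t) I t := by
    intro m hm t ht
    have h1 := (hv.differentiableOn_iteratedDerivWithin
      (show (m : WithTop ℕ∞) < n by exact_mod_cast hm) hI t ht).hasDerivWithinAt
    have h2 : Dv (m+1) t = derivWithin (iteratedDerivWithin m v I) I t :=
      congrFun iteratedDerivWithin_succ t
    rw [h2]; exact h1
  -- safe index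
  set idx : ℕ → Fin (n + 1) := fun m => if h : m ≤ n then ⟨m, Nat.lt_succ_of_le h⟩ else ⟨0, Nat.succ_pos n⟩
    with hidx
  have hidxk : ∀ k : Fin (n+1), idx (k : ℕ) = k := by
    intro k
    simp only [hidx, dif_pos (Nat.lt_succ_iff.mp k.isLt)]
  -- summand and its derivative
  set c : ℕ → ℕ → ℝ → ℝ := fun i j t =>
    if i + j + 1 ≤ n then
      (-1 : ℝ)^i * dotProduct ((P (idx (i+j+1))).mulVec (Du j t)) (Dv i t)
    else 0 with hc
  set c' : ℕ → ℕ → ℝ → ℝ := fun i j t =>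
    if i + j + 1 ≤ n then
      (-1 : ℝ)^i * (dotProduct ((P (idx (i+j+1))).mulVec (Du (j+1) t)) (Dv i t)
        + dotProduct ((P (idx (i+j+1))).mulVec (Du j t)) (Dv (i+1) t))
    else 0 with hc'
  set G : ℝ → ℝ := fun t => ∑ i ∈ Finset.range n, ∑ j ∈ Finset.range n, c i j t with hG
  have hsecond : ∀ t : ℝ, dotProduct (u t) (∑ k : Fin (n + 1), (P k).mulVec (Dv (k : ℕ) t))
      = ∑ k : Fin (n + 1), (-1:ℝ)^((k : ℕ)+1) *
          dotProduct ((P k).mulVec (u t)) (Dv (k : ℕ) t) := by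
    intro t
    have h1 : dotProduct (u t) (∑ k : Fin (n + 1), (P k).mulVec (Dv (k : ℕ) t))
        = ∑ k : Fin (n + 1), dotProduct (u t) ((P k).mulVec (Dv (k : ℕ) t)) := by
      simp only [dotProduct, Finset.sum_apply, Finset.mul_sum]
      exact Finset.sum_comm
    rw [h1]
    refine Finset.sum_congr rfl fun k _ => ?_
    rw [Matrix.dotProduct_mulVec, ← Matrix.mulVec_transpose, hP k, Matrix.smul_mulVec,
      smul_dotProduct, smul_eq_mul]
  -- G is the boundary form
  have hGQ : ∀ t : ℝ, dotProduct
      (Q.mulVec (fun p : Fin n × Fin d => Du (p.1 : ℕ) t p.2))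
      (fun p : Fin n × Fin d => Dv (p.1 : ℕ) t p.2) = G t := by
    intro t
    have hcell : ∀ (i j : Fin n),
        ∑ k : Fin d, (∑ l : Fin d, Q (i, k) (j, l) * Du (j : ℕ) t l) * Dv (i : ℕ) t k
          = c (i : ℕ) (j : ℕ) t := by
      intro i j
      by_cases h : (i : ℕ) + (j : ℕ) + 1 ≤ n
      · simp only [hQ, dif_pos h, hc, if_pos h, hidx, dif_pos h, dotProduct,
          Matrix.mulVec]
        rw [Finset.mul_sum]
        refine Finset.sum_congr rfl fun k _ => ?_
        rw [← mul_assoc, Finset.mul_sum]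
        refine congrArg (· * Dv (i : ℕ) t k) (Finset.sum_congr rfl fun l _ => ?_)
        rw [mul_assoc]
      · simp only [hQ, dif_neg h, hc, if_neg h, zero_mul, Finset.sum_const_zero]
    have expand : dotProduct
        (Q.mulVec (fun p : Fin n × Fin d => Du (p.1 : ℕ) t p.2))
        (fun p : Fin n × Fin d => Dv (p.1 : ℕ) t p.2)
        = ∑ i : Fin n, ∑ k : Fin d,
            (∑ j : Fin n, ∑ l : Fin d, Q (i, k) (j, l) * Du (j : ℕ) t l) * Dv (i : ℕ) t k := by
      simp only [dotProduct, Matrix.mulVec, Fintype.sum_prod_type]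
    rw [expand]
    have swap : ∀ i : Fin n, ∑ k : Fin d,
        (∑ j : Fin n, ∑ l : Fin d, Q (i, k) (j, l) * Du (j : ℕ) t l) * Dv (i : ℕ) t k
        = ∑ j : Fin n, ∑ k : Fin d,
            (∑ l : Fin d, Q (i, k) (j, l) * Du (j : ℕ) t l) * Dv (i : ℕ) t k := by
      intro i
      simp only [Finset.sum_mul]
      exact Finset.sum_comm
    simp only [hG]
    rw [← Fin.sum_univ_eq_sum_range (fun i => ∑ j ∈ Finset.range n, c i j t) n]
    refine Finset.sum_congr rfl fun i _ => ?_
    rw [swap i, ← Fin.sum_univ_eq_sum_range (fun j => c (i : ℕ) j t) n]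
    exact Finset.sum_congr rfl fun j _ => hcell i j
  -- derivative of G
  have hGd : ∀ t ∈ I, HasDerivWithinAt G (∑ i ∈ Finset.range n, ∑ j ∈ Finset.range n, c' i j t) I t := by
    intro t ht
    apply HasDerivWithinAt.fun_sum
    intro i hi
    apply HasDerivWithinAt.fun_sum
    intro j hj
    simp only [Finset.mem_range] at hi hj
    simp only [hc, hc']
    by_cases h : i + j + 1 ≤ n
    · simp only [if_pos h]
      exact (aux_hasDeriv_dot _ (hdu j (by omega) t ht) (hdv i (by omega) t ht)).const_mul _
    · simp only [if_neg h]
      exact hasDerivWithinAt_const t I 0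
  -- the telescoping identity
  have hkey : ∀ t : ℝ, ∑ i ∈ Finset.range n, ∑ j ∈ Finset.range n, c' i j t
      = (∑ k : Fin (n + 1), dotProduct ((P k).mulVec (Du (k : ℕ) t)) (v t)) +
        dotProduct (u t) (∑ k : Fin (n + 1), (P k).mulVec (Dv (k : ℕ) t)) := by
    intro t
    set g : ℕ → ℕ → ℝ := fun i j =>
      if i + j ≤ n then
        (-1 : ℝ)^i * dotProduct ((P (idx (i+j))).mulVec (Du j t)) (Dv i t)
      else 0 with hg
    have step1 : ∑ i ∈ Finset.range n, ∑ j ∈ Finset.range n, c' i j t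
        = ∑ i ∈ Finset.range n, ∑ j ∈ Finset.range (n - i), (g i (j+1) - g (i+1) j) := by
      refine Finset.sum_congr rfl fun i hi => ?_
      simp only [Finset.mem_range] at hi
      have hrestrict : ∑ j ∈ Finset.range n, c' i j t = ∑ j ∈ Finset.range (n - i), c' i j t := by
        refine (Finset.sum_subset (Finset.range_subset_range.mpr (by omega)) ?_).symm
        intro j hj hj'
        simp only [Finset.mem_range] at hj hj'
        simp only [hc', if_neg (show ¬ (i + j + 1 ≤ n) by omega)]
      rw [hrestrict]
      refine Finset.sum_congr rfl fun j hj => ?_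
      simp only [Finset.mem_range] at hj
      have h1 : i + j + 1 ≤ n := by omega
      have e1 : i + (j+1) = i + j + 1 := by omega
      have e2 : (i+1) + j = i + j + 1 := by omega
      simp only [hc', hg, e1, e2, if_pos h1]
      rw [pow_succ]
      ring
    have step2 : ∑ j ∈ Finset.range (n+1), g 0 j
        = ∑ k : Fin (n + 1), dotProduct ((P k).mulVec (Du (k : ℕ) t)) (v t) := by
      rw [← Fin.sum_univ_eq_sum_range (fun j => g 0 j) (n+1)]
      refine Finset.sum_congr rfl fun k _ => ?_
      have hk : (k : ℕ) ≤ n := Nat.lt_succ_iff.mp k.isLt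
      simp only [hg, Nat.zero_add, if_pos hk, pow_zero, one_mul, hidxk, hDv0]
    have step3 : ∑ i ∈ Finset.range (n+1), g i 0
        = - dotProduct (u t) (∑ k : Fin (n + 1), (P k).mulVec (Dv (k : ℕ) t)) := by
      rw [hsecond t, ← Fin.sum_univ_eq_sum_range (fun i => g i 0) (n+1), ← Finset.sum_neg_distrib]
      refine Finset.sum_congr rfl fun k _ => ?_
      have hk : (k : ℕ) ≤ n := Nat.lt_succ_iff.mp k.isLt
      simp only [hg, Nat.add_zero, if_pos hk, hidxk, hDu0, pow_succ]
      ring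
    rw [step1, aux_tri n g, step2, step3]
    ring
  -- integrability / continuity of the integrand pieces
  have hint1 : ∀ k : Fin (n+1), IntervalIntegrable
      (fun t => dotProduct ((P k).mulVec (Du (k : ℕ) t)) (v t)) volume a b := by
    intro k
    apply ContinuousOn.intervalIntegrable
    rw [Set.uIcc_of_le hab']
    exact aux_cont_dot _ (hcu k (Nat.lt_succ_iff.mp k.isLt)) hv.continuousOn
  have hint2 : IntervalIntegrable
      (fun t => dotProduct (u t) (∑ k : Fin (n + 1), (P k).mulVec (Dv (k : ℕ) t)))
      volume a b := by
    apply ContinuousOn.intervalIntegrable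
    rw [Set.uIcc_of_le hab']
    have hc2 : ContinuousOn (fun t => ∑ k : Fin (n + 1), (-1:ℝ)^((k : ℕ)+1) *
        dotProduct ((P k).mulVec (u t)) (Dv (k : ℕ) t)) I :=
      continuousOn_finset_sum _ fun k _ =>
        continuousOn_const.mul
          (aux_cont_dot _ hu.continuousOn (hcv (k : ℕ) (Nat.lt_succ_iff.mp k.isLt)))
    exact hc2.congr fun t _ => hsecond t
  have hsum1 : IntervalIntegrable
      (fun t => ∑ k : Fin (n + 1), dotProduct ((P k).mulVec (Du (k : ℕ) t)) (v t))
      volume a b := by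
    have h := IntervalIntegrable.sum (μ := volume) Finset.univ
      (f := fun (k : Fin (n+1)) (t : ℝ) => dotProduct ((P k).mulVec (Du (k : ℕ) t)) (v t))
      (fun k _ => hint1 k)
    simpa [Finset.sum_fn] using h
  -- FTC
  have hFTC : ∫ t in a..b, ((∑ k : Fin (n + 1), dotProduct ((P k).mulVec (Du (k : ℕ) t)) (v t)) +
        dotProduct (u t) (∑ k : Fin (n + 1), (P k).mulVec (Dv (k : ℕ) t))) = G b - G a := by
    apply intervalIntegral.integral_eq_sub_of_hasDeriv_right_of_le hab'
    · intro t ht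
      exact (hGd t ht).continuousWithinAt
    · intro t ht
      have h1 := hGd t (Set.Ioo_subset_Icc_self ht)
      rw [hkey t] at h1
      exact (h1.hasDerivAt (Icc_mem_nhds ht.1 ht.2)).hasDerivWithinAt
    · exact hsum1.add hint2
  calc (∑ k : Fin (n + 1), ∫ t in a..b, dotProduct ((P k).mulVec (Du (k : ℕ) t)) (v t)) +
      (∫ t in a..b, dotProduct (u t) (∑ k : Fin (n + 1), (P k).mulVec (Dv (k : ℕ) t)))
      = ∫ t in a..b, ((∑ k : Fin (n + 1), dotProduct ((P k).mulVec (Du (k : ℕ) t)) (v t)) +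
        dotProduct (u t) (∑ k : Fin (n + 1), (P k).mulVec (Dv (k : ℕ) t))) := by
        rw [intervalIntegral.integral_add hsum1 hint2,
          intervalIntegral.integral_finset_sum (fun k _ => hint1 k)]
    _ = G b - G a := hFTC
    _ = _ := by rw [← hGQ b, ← hGQ a]
end

section
/- Let n, d ∈ ℕ with n ≥ 1 and let P₁, …, Pₙ ∈ ℝ^{d×d} satisfy Pⱼᵀ = (−1)^{j+1} Pⱼ for j = 1, …, n and det Pₙ ≠ 0. Define Q ∈ ℝ^{nd×nd} as the n×n block matrix whose (i,j)-th d×d block (1 ≤ i, j ≤ n) equals (−1)^{i+1} P_{i+j−1} if i + j − 1 ≤ n and 0 otherwise. Then Q is symmetric and invertible. -/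
/-- Let `P 0, …, P (n-1)` stand for `P₁, …, Pₙ` with `Pⱼᵀ = (−1)^{j+1} Pⱼ` and
`det Pₙ ≠ 0`. Then the block matrix `Q` with (1-based) `(i,j)`-th `d×d` block
`(−1)^{i+1} P_{i+j−1}` (for `i+j−1 ≤ n`, zero otherwise) is symmetric and invertible. -/
theorem stmt_19 (n d : ℕ) (hn : 1 ≤ n) (P : Fin n → Matrix (Fin d) (Fin d) ℝ)
    (hP : ∀ k : Fin n, (P k).transpose = ((-1 : ℝ) ^ (k : ℕ)) • P k)
    (hPn : (P ⟨n - 1, by omega⟩).det ≠ 0)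
    (Q : Matrix (Fin n × Fin d) (Fin n × Fin d) ℝ)
    (hQ : ∀ (i j : Fin n) (k l : Fin d),
      Q (i, k) (j, l) =
        if h : (i : ℕ) + (j : ℕ) + 1 ≤ n then
          ((-1 : ℝ) ^ (i : ℕ)) * P ⟨(i : ℕ) + (j : ℕ), by omega⟩ k l
        else 0) :
    Q.IsSymm ∧ IsUnit Q := by
  have hPval : ∀ (m : Fin n) (k l : Fin d), P m l k = (-1 : ℝ) ^ (m : ℕ) * P m k l := by
    intro m k l
    have := congrFun (congrFun (hP m) k) l
    simpa [Matrix.transpose_apply] using this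
  constructor
  · rw [Matrix.IsSymm]
    ext ⟨i, k⟩ ⟨j, l⟩
    rw [Matrix.transpose_apply, hQ, hQ]
    by_cases h : (i : ℕ) + (j : ℕ) + 1 ≤ n
    · have h' : (j : ℕ) + (i : ℕ) + 1 ≤ n := by omega
      rw [dif_pos h', dif_pos h]
      have he : (⟨(j : ℕ) + (i : ℕ), by omega⟩ : Fin n) = ⟨(i : ℕ) + (j : ℕ), by omega⟩ := by
        simp [Nat.add_comm]
      rw [he, hPval]
      ring_nf
      rw [mul_comm (j:ℕ) 2, pow_mul]
      simp
    · have h' : ¬ ((j : ℕ) + (i : ℕ) + 1 ≤ n) := by omega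
      rw [dif_neg h', dif_neg h]
  · rw [Matrix.isUnit_iff_isUnit_det, isUnit_iff_ne_zero]
    intro hdet
    rw [← Matrix.exists_mulVec_eq_zero_iff] at hdet
    obtain ⟨v, hv0, hv⟩ := hdet
    have key : ∀ m : ℕ, ∀ hm : m < n, ∀ l : Fin d, v (⟨m, hm⟩, l) = 0 := by
      intro m
      induction m using Nat.strong_induction_on with
      | _ m IH =>
        intro hm l
        set i : Fin n := ⟨n - 1 - m, by omega⟩ with hi
        have hrow : (P ⟨n - 1, by omega⟩).mulVec (fun l => v (⟨m, hm⟩, l)) = 0 := by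
          funext k
          have h0 : Q.mulVec v (i, k) = 0 := by rw [hv]; rfl
          rw [Matrix.mulVec, dotProduct, Fintype.sum_prod_type] at h0
          rw [Finset.sum_eq_single (⟨m, hm⟩ : Fin n)] at h0
          · have hsum : ∀ l' : Fin d, Q (i, k) ((⟨m, hm⟩ : Fin n), l') * v (⟨m, hm⟩, l')
                = (-1 : ℝ) ^ (i : ℕ) * (P ⟨n - 1, by omega⟩ k l' * v (⟨m, hm⟩, l')) := by
              intro l'
              rw [hQ]
              have hle : (i : ℕ) + m + 1 ≤ n := by simp [hi]; omega
              rw [dif_pos hle]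
              have he : (⟨(i : ℕ) + m, by omega⟩ : Fin n) = ⟨n - 1, by omega⟩ := by
                simp [hi]; omega
              rw [he]; ring
            rw [Finset.sum_congr rfl (fun l' _ => hsum l'), ← Finset.mul_sum] at h0
            have hne : ((-1 : ℝ) ^ (i : ℕ)) ≠ 0 := by
              simp
            have := (mul_eq_zero.mp h0).resolve_left hne
            simpa [Matrix.mulVec, dotProduct] using this
          · intro j _ hj
            rw [Finset.sum_eq_zero]
            intro l' _
            by_cases hle : (i : ℕ) + (j : ℕ) + 1 ≤ n
            · have hjm : (j : ℕ) < m := by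
                rcases Nat.lt_or_ge (j : ℕ) m with h1 | h1
                · exact h1
                · exfalso
                  have : (j : ℕ) = m := by simp [hi] at hle; omega
                  exact hj (Fin.ext this)
              have : v (j, l') = 0 := by
                have := IH (j : ℕ) hjm j.isLt l'
                simpa using this
              rw [this, mul_zero]
            · rw [hQ, dif_neg hle, zero_mul]
          · intro h; exact absurd (Finset.mem_univ _) h
        have hPinv : Function.Injective (P ⟨n - 1, by omega⟩).mulVec := by
          intro a b hab
          by_contra hne
          apply hPn
          rw [← Matrix.exists_mulVec_eq_zero_iff]
          exact ⟨a - b, sub_ne_zero.mpr hne, by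
            rw [Matrix.mulVec_sub, hab, sub_self]⟩
        have : (fun l => v (⟨m, hm⟩, l)) = 0 := by
          apply hPinv
          rw [hrow, Matrix.mulVec_zero]
        exact congrFun this l
    apply hv0
    funext ⟨j, l⟩
    have := key (j : ℕ) j.isLt l
    simpa using this
end
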